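/- arXiv:2309.11416 — 7 statements merged into one kernel-verified Lean document; each statement's English description precedes it below -/
import Mathlib

section
/- Let Q : E → ℝ^Z satisfy weak substitutes and connected strict substitutes, with ∑_z Q_z(p) = c for all p. If p and p' in E satisfy Q_z(p) ≤ Q_z(p') for all z ≠ 0 and p_0 ≤ p'_0, then p_z ≤ p'_z for all z ∈ Z. -/
/-- **Inverse isotonicity (weak version).** Let `Q : E → ℝ^Z` satisfy weak substitutes and
connected strict substitutes, with `∑ z, Q z p = c` for all `p ∈ E`. If `p, p' ∈ E` satisfy
`Q z p ≤ Q z p'` for all `z ≠ 0` and `p 0 ≤ p' 0`, then `p z ≤ p' z` for all `z`. -/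
theorem inverse_isotone_weak {Z : Type*} [Fintype Z] [DecidableEq Z]
    (L U : Z → ℝ) (E : Set (Z → ℝ))
    (hE : ∀ p : Z → ℝ, p ∈ E ↔ ∀ z, p z ∈ Set.Ioo (L z) (U z))
    (Q : (Z → ℝ) → Z → ℝ) (c : ℝ) (z0 : Z)
    (hcont : ContinuousOn Q E)
    (hbal : ∀ p ∈ E, ∑ z, Q p z = c)
    -- weak substitutes: `Q x` is nondecreasing in `p x`
    (hweak_own : ∀ x : Z, ∀ p ∈ E, ∀ p' ∈ E,
      (∀ z, z ≠ x → p z = p' z) → p x ≤ p' x → Q p x ≤ Q p' x)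
    -- weak substitutes: `Q x` is nonincreasing in `p y` for `y ≠ x`
    (hweak_cross : ∀ x y : Z, y ≠ x → ∀ p ∈ E, ∀ p' ∈ E,
      (∀ z, z ≠ y → p z = p' z) → p y ≤ p' y → Q p' x ≤ Q p x)
    -- connected strict substitutes
    (hcss : ∀ X : Finset Z, X.Nonempty → X ≠ Finset.univ →
      ∀ p ∈ E, ∀ p' ∈ E, (∀ x ∈ X, p x = p' x) → (∀ y ∉ X, p y ≤ p' y) → p ≠ p' →
      ∑ x ∈ X, Q p' x < ∑ x ∈ X, Q p x)
    (p p' : Z → ℝ) (hp : p ∈ E) (hp' : p' ∈ E)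
    (hQ : ∀ z, z ≠ z0 → Q p z ≤ Q p' z) (h0 : p z0 ≤ p' z0) :
    ∀ z, p z ≤ p' z := by
  by_contra hcon
  push_neg at hcon
  obtain ⟨w, hw⟩ := hcon
  classical
  set X : Finset Z := Finset.univ.filter (fun z => p' z < p z) with hX
  have hwX : w ∈ X := by simp [hX, hw]
  have hXne : X.Nonempty := ⟨w, hwX⟩
  have hz0 : z0 ∉ X := by simp [hX]; exact h0
  have hXuniv : X ≠ Finset.univ := fun h => hz0 (h ▸ Finset.mem_univ z0)
  set q : Z → ℝ := fun z => max (p z) (p' z) with hqdef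
  have hq : q ∈ E := by
    rw [hE]
    intro z
    obtain ⟨h1, h2⟩ := (hE p).mp hp z
    obtain ⟨h3, h4⟩ := (hE p').mp hp' z
    exact ⟨lt_of_lt_of_le h1 (le_max_left _ _), max_lt h2 h4⟩
  -- q agrees with p' on Xᶜ
  have hqc : ∀ x ∈ Xᶜ, p' x = q x := by
    intro x hx
    simp only [Finset.mem_compl, hX, Finset.mem_filter, Finset.mem_univ, true_and,
      not_lt] at hx
    exact (max_eq_right hx).symm
  have hXcne : (Xᶜ : Finset Z).Nonempty := ⟨z0, Finset.mem_compl.mpr hz0⟩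
  have hXcuniv : (Xᶜ : Finset Z) ≠ Finset.univ := by
    intro h
    have := h ▸ Finset.mem_univ w
    exact (Finset.mem_compl.mp this) hwX
  have hqne : p' ≠ q := by
    intro h
    have : p' w = q w := congrFun h w
    have hle : p' w < p w := hw
    have : p' w = p w := by
      simpa [hqdef, max_eq_left hle.le] using this
    linarith
  have h2 : ∑ x ∈ Xᶜ, Q q x < ∑ x ∈ Xᶜ, Q p' x := by
    refine hcss Xᶜ hXcne hXcuniv p' hp' q hq hqc ?_ hqne
    intro y _
    exact le_max_right _ _
  have h1 : ∑ x ∈ X, Q q x ≤ ∑ x ∈ X, Q p x := by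
    by_cases hpq : p = q
    · rw [hpq]
    · refine le_of_lt (hcss X hXne hXuniv p hp q hq ?_ ?_ hpq)
      · intro x hx
        simp only [hX, Finset.mem_filter, Finset.mem_univ, true_and] at hx
        exact (max_eq_left hx.le).symm
      · intro y _
        exact le_max_left _ _
  have h3 : ∑ x ∈ X, Q p x ≤ ∑ x ∈ X, Q p' x := by
    refine Finset.sum_le_sum fun x hx => ?_
    refine hQ x fun h => hz0 (h ▸ hx)
  have bp : ∑ x ∈ X, Q p x + ∑ x ∈ Xᶜ, Q p x = c := by
    rw [Finset.sum_add_sum_compl]; exact hbal p hp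
  have bp' : ∑ x ∈ X, Q p' x + ∑ x ∈ Xᶜ, Q p' x = c := by
    rw [Finset.sum_add_sum_compl]; exact hbal p' hp'
  have bq : ∑ x ∈ X, Q q x + ∑ x ∈ Xᶜ, Q q x = c := by
    rw [Finset.sum_add_sum_compl]; exact hbal q hq
  -- h2 : ∑_{Xᶜ} Q q < ∑_{Xᶜ} Q p'  ⇒  ∑_X Q q > ∑_X Q p'
  -- combined: ∑_X Q p ≥ ∑_X Q q > ∑_X Q p' ≥ ∑_X Q p, contradiction
  linarith
end

section
/- Let Q : E → ℝ^Z satisfy weak substitutes and connected strict substitutes, with ∑_z Q_z(p) = c for all p. If p and p' in E satisfy Q_z(p) ≤ Q_z(p') for all z ≠ 0 and p_0 < p'_0, then p_z < p'_z for all z ∈ Z. -/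
/-- **Inverse isotonicity (strict version).** Let `Q : E → ℝ^Z` satisfy weak substitutes and
connected strict substitutes, with `∑ z, Q z p = c` for all `p ∈ E`. If `p, p' ∈ E` satisfy
`Q z p ≤ Q z p'` for all `z ≠ 0` and `p 0 < p' 0`, then `p z < p' z` for all `z`. -/
theorem inverse_isotone_strict {Z : Type*} [Fintype Z] [DecidableEq Z]
    (L U : Z → ℝ) (E : Set (Z → ℝ))
    (hE : ∀ p : Z → ℝ, p ∈ E ↔ ∀ z, p z ∈ Set.Ioo (L z) (U z))
    (Q : (Z → ℝ) → Z → ℝ) (c : ℝ) (z0 : Z)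
    (hcont : ContinuousOn Q E)
    (hbal : ∀ p ∈ E, ∑ z, Q p z = c)
    -- weak substitutes: `Q x` is nondecreasing in `p x`
    (hweak_own : ∀ x : Z, ∀ p ∈ E, ∀ p' ∈ E,
      (∀ z, z ≠ x → p z = p' z) → p x ≤ p' x → Q p x ≤ Q p' x)
    -- weak substitutes: `Q x` is nonincreasing in `p y` for `y ≠ x`
    (hweak_cross : ∀ x y : Z, y ≠ x → ∀ p ∈ E, ∀ p' ∈ E,
      (∀ z, z ≠ y → p z = p' z) → p y ≤ p' y → Q p' x ≤ Q p x)
    -- connected strict substitutes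
    (hcss : ∀ X : Finset Z, X.Nonempty → X ≠ Finset.univ →
      ∀ p ∈ E, ∀ p' ∈ E, (∀ x ∈ X, p x = p' x) → (∀ y ∉ X, p y ≤ p' y) → p ≠ p' →
      ∑ x ∈ X, Q p' x < ∑ x ∈ X, Q p x)
    (p p' : Z → ℝ) (hp : p ∈ E) (hp' : p' ∈ E)
    (hQ : ∀ z, z ≠ z0 → Q p z ≤ Q p' z) (h0 : p z0 < p' z0) :
    ∀ z, p z < p' z := by
  by_contra h
  push_neg at h
  obtain ⟨w, hw⟩ := h
  classical
  set X : Finset Z := Finset.univ.filter (fun z => p' z ≤ p z) with hX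
  have hwX : w ∈ X := by simp [hX, hw]
  have hz0X : z0 ∉ X := by simp [hX]; exact h0
  set q : Z → ℝ := fun z => max (p z) (p' z) with hq
  have hqE : q ∈ E := by
    rw [hE]; intro z
    obtain ⟨h1, h2⟩ := (hE p).mp hp z
    obtain ⟨h3, h4⟩ := (hE p').mp hp' z
    exact ⟨lt_max_of_lt_left h1, max_lt h2 h4⟩
  have hXne : X.Nonempty := ⟨w, hwX⟩
  have hXuniv : X ≠ Finset.univ := fun hu => hz0X (hu ▸ Finset.mem_univ z0)
  have hpq : p ≠ q := by
    intro hpe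
    have h1 := congrFun hpe z0
    have h2 : p' z0 ≤ q z0 := le_max_right _ _
    rw [← h1] at h2
    linarith
  have h1 : ∑ x ∈ X, Q q x < ∑ x ∈ X, Q p x := by
    apply hcss X hXne hXuniv p hp q hqE _ (fun y _ => le_max_left _ _) hpq
    intro x hx
    simp only [hX, Finset.mem_filter] at hx
    simp [hq, max_eq_left hx.2]
  have hle : ∑ x ∈ X, Q p x ≤ ∑ x ∈ X, Q p' x := by
    apply Finset.sum_le_sum
    intro x hx
    exact hQ x (fun hxz => hz0X (hxz ▸ hx))
  by_cases hqp' : q = p'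
  · rw [hqp'] at h1; linarith
  · have hXc_ne : Xᶜ.Nonempty := ⟨z0, Finset.mem_compl.mpr hz0X⟩
    have hXc_univ : Xᶜ ≠ Finset.univ := by
      intro hu
      have : w ∈ Xᶜ := hu ▸ Finset.mem_univ w
      exact (Finset.mem_compl.mp this) hwX
    have h2 : ∑ x ∈ Xᶜ, Q q x < ∑ x ∈ Xᶜ, Q p' x := by
      apply hcss Xᶜ hXc_ne hXc_univ p' hp' q hqE _ (fun y _ => le_max_right _ _)
        (fun hh => hqp' hh.symm)
      intro x hx
      have hx' : x ∉ X := Finset.mem_compl.mp hx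
      simp only [hX, Finset.mem_filter, Finset.mem_univ, true_and, not_le] at hx'
      simp [hq, max_eq_right hx'.le]
    have hbq : ∑ x ∈ X, Q q x + ∑ x ∈ Xᶜ, Q q x = c := by
      rw [Finset.sum_add_sum_compl]; exact hbal q hqE
    have hbp' : ∑ x ∈ X, Q p' x + ∑ x ∈ Xᶜ, Q p' x = c := by
      rw [Finset.sum_add_sum_compl]; exact hbal p' hp'
    linarith
end

section
/- Under weak substitutes, connected strict substitutes, the balance condition ∑_z Q_z(p) = c = ∑_z q_z, and a normalization map ψ that is strictly increasing along coordinatewise strict increases (p_z < p'_z for all z implies ψ(p) < ψ(p')), the system Q(p) = q together with ψ(p) = K has at most one solution p ∈ E. -/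
/-!
Suppose `Q p = Q p'` and `p < p'` on a set `T` that is neither empty nor everything. The
join `m = p ⊔ p'` agrees with `p` off `T` and with `p'` on `T`; connected strict substitutes
then make `Q m` strictly smaller than `Q p` in total off `T`, and no larger than `Q p' = Q p`
in total on `T`, which contradicts `∑ Q m = ∑ Q p`. So `p ≥ p'` everywhere or `p < p'`
everywhere, and the same holds with `p`, `p'` swapped; the normalization `ψ` rules out the
strict alternatives.
-/

open Finset

def ConnectedStrictSubstitutes {Z : Type*} [Fintype Z] (E : Set (Z → ℝ))
    (Q : (Z → ℝ) → Z → ℝ) : Prop :=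
  ∀ X : Finset Z, X.Nonempty → X ≠ univ →
    ∀ p ∈ E, ∀ p' ∈ E, (∀ x ∈ X, p x = p' x) → (∀ y ∉ X, p y ≤ p' y) → p ≠ p' →
      ∑ x ∈ X, Q p' x < ∑ x ∈ X, Q p x

namespace ConnectedStrictSubstitutes

variable {Z : Type*} [Fintype Z] {E : Set (Z → ℝ)} {Q : (Z → ℝ) → Z → ℝ}

theorem sum_le (hQ : ConnectedStrictSubstitutes E Q) {X : Finset Z} (hX : X.Nonempty)
    (hXu : X ≠ univ) {p p' : Z → ℝ} (hp : p ∈ E) (hp' : p' ∈ E) (heq : ∀ x ∈ X, p x = p' x)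
    (hle : ∀ y ∉ X, p y ≤ p' y) : ∑ x ∈ X, Q p' x ≤ ∑ x ∈ X, Q p x := by
  rcases eq_or_ne p p' with rfl | hne
  · rfl
  · exact (hQ X hX hXu p hp p' hp' heq hle hne).le

theorem forall_le_or_forall_lt (hQ : ConnectedStrictSubstitutes E Q) (hE : SupClosed E) {c : ℝ}
    (hbal : ∀ p ∈ E, ∑ z, Q p z = c) {p p' : Z → ℝ} (hp : p ∈ E) (hp' : p' ∈ E)
    (hpp' : Q p = Q p') : (∀ z, p' z ≤ p z) ∨ ∀ z, p z < p' z := by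
  classical
  by_contra! ⟨⟨y, hy⟩, ⟨x, hx⟩⟩
  set T := univ.filter fun z => p z < p' z
  have hyT : y ∈ T := by simpa [T] using hy
  have hxT : x ∉ T := by simpa [T] using hx
  have hm : p ⊔ p' ∈ E := hE hp hp'
  have hoff : ∑ z ∈ Tᶜ, Q (p ⊔ p') z < ∑ z ∈ Tᶜ, Q p z := by
    refine hQ Tᶜ ⟨x, mem_compl.2 hxT⟩ (fun h => mem_compl.1 (h ▸ mem_univ y) hyT) p hp _ hm
      (fun z hz => ?_) (fun z _ => le_sup_left)
      fun h => hy.not_ge ((le_sup_right.trans_eq h.symm) y)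
    have : p' z ≤ p z := by simpa [T] using hz
    simp [this]
  have hon : ∑ z ∈ T, Q (p ⊔ p') z ≤ ∑ z ∈ T, Q p' z := by
    refine hQ.sum_le ⟨y, hyT⟩ (fun h => hxT (h ▸ mem_univ x)) hp' hm (fun z hz => ?_)
      fun z _ => le_sup_right
    have : p z < p' z := by simpa [T] using hz
    simp [this.le]
  have hsplit_m := sum_add_sum_compl T (Q (p ⊔ p'))
  have hsplit_p := sum_add_sum_compl T (Q p)
  rw [hbal _ hm] at hsplit_m
  rw [hbal _ hp, hpp'] at hsplit_p
  rw [hpp'] at hoff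
  linarith

end ConnectedStrictSubstitutes

theorem supClosed_of_forall_mem_Ioo {Z : Type*} {L U : Z → ℝ} {E : Set (Z → ℝ)}
    (hE : ∀ p : Z → ℝ, p ∈ E ↔ ∀ z, p z ∈ Set.Ioo (L z) (U z)) : SupClosed E := by
  have hbox : E = Set.univ.pi fun z => Set.Ioo (L z) (U z) :=
    Set.ext fun p => (hE p).trans (by simp)
  exact hbox ▸ supClosed_pi fun _ _ => LinearOrder.supClosed _

theorem uniqueness_with_normalization_general {Z : Type*} [Fintype Z]
    (L U : Z → ℝ) (E : Set (Z → ℝ))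
    (hE : ∀ p : Z → ℝ, p ∈ E ↔ ∀ z, p z ∈ Set.Ioo (L z) (U z))
    (Q : (Z → ℝ) → Z → ℝ) (c : ℝ) (q : Z → ℝ) (K : ℝ)
    (ψ : (Z → ℝ) → ℝ)
    (hbal : ∀ p ∈ E, ∑ z, Q p z = c)
    -- connected strict substitutes
    (hcss : ∀ X : Finset Z, X.Nonempty → X ≠ Finset.univ →
      ∀ p ∈ E, ∀ p' ∈ E, (∀ x ∈ X, p x = p' x) → (∀ y ∉ X, p y ≤ p' y) → p ≠ p' →
      ∑ x ∈ X, Q p' x < ∑ x ∈ X, Q p x)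
    -- `ψ` is strictly increasing along coordinatewise strict increases
    (hψ : ∀ p p' : Z → ℝ, (∀ z, p z < p' z) → ψ p < ψ p')
    (p p' : Z → ℝ) (hp : p ∈ E) (hp' : p' ∈ E)
    (hsol : Q p = q ∧ ψ p = K) (hsol' : Q p' = q ∧ ψ p' = K) :
    p = p' := by
  have hcss : ConnectedStrictSubstitutes E Q := hcss
  have hsup := supClosed_of_forall_mem_Ioo hE
  have hQ : Q p = Q p' := hsol.1.trans hsol'.1.symm
  have hψeq : ψ p = ψ p' := hsol.2.trans hsol'.2.symm
  have hge := (hcss.forall_le_or_forall_lt hsup hbal hp hp' hQ).resolve_right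
    fun h => (hψ p p' h).ne hψeq
  have hle := (hcss.forall_le_or_forall_lt hsup hbal hp' hp hQ.symm).resolve_right
    fun h => (hψ p' p h).ne' hψeq
  exact funext fun z => le_antisymm (hle z) (hge z)

/-- **Uniqueness under a general normalization.** Under weak substitutes, connected strict
substitutes, the balance condition `∑ z, Q z p = c = ∑ z, q z`, and a normalization map `ψ`
that is strictly increasing along coordinatewise strict increases, the system `Q p = q`
together with `ψ p = K` has at most one solution `p ∈ E`. -/
theorem uniqueness_with_normalization {Z : Type*} [Fintype Z] [DecidableEq Z]
    (L U : Z → ℝ) (E : Set (Z → ℝ))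
    (hE : ∀ p : Z → ℝ, p ∈ E ↔ ∀ z, p z ∈ Set.Ioo (L z) (U z))
    (Q : (Z → ℝ) → Z → ℝ) (c : ℝ) (q : Z → ℝ) (K : ℝ)
    (ψ : (Z → ℝ) → ℝ)
    (hcont : ContinuousOn Q E)
    (hbal : ∀ p ∈ E, ∑ z, Q p z = c)
    (hq : ∑ z, q z = c)
    -- weak substitutes: `Q x` is nondecreasing in `p x`
    (hweak_own : ∀ x : Z, ∀ p ∈ E, ∀ p' ∈ E,
      (∀ z, z ≠ x → p z = p' z) → p x ≤ p' x → Q p x ≤ Q p' x)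
    -- weak substitutes: `Q x` is nonincreasing in `p y` for `y ≠ x`
    (hweak_cross : ∀ x y : Z, y ≠ x → ∀ p ∈ E, ∀ p' ∈ E,
      (∀ z, z ≠ y → p z = p' z) → p y ≤ p' y → Q p' x ≤ Q p x)
    -- connected strict substitutes
    (hcss : ∀ X : Finset Z, X.Nonempty → X ≠ Finset.univ →
      ∀ p ∈ E, ∀ p' ∈ E, (∀ x ∈ X, p x = p' x) → (∀ y ∉ X, p y ≤ p' y) → p ≠ p' →
      ∑ x ∈ X, Q p' x < ∑ x ∈ X, Q p x)
    -- `ψ` is strictly increasing along coordinatewise strict increases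
    (hψ : ∀ p p' : Z → ℝ, (∀ z, p z < p' z) → ψ p < ψ p')
    (p p' : Z → ℝ) (hp : p ∈ E) (hp' : p' ∈ E)
    (hsol : Q p = q ∧ ψ p = K) (hsol' : Q p' = q ∧ ψ p' = K) :
    p = p' :=
  uniqueness_with_normalization_general L U E hE Q c q K ψ hbal hcss hψ p p' hp hp' hsol hsol'
end

section
/- Assume for each p_0 ∈ (L_0, U_0) there is a unique P(p_0) ∈ ∏_{z≠0}(L_z, U_z) with Q(p_0, P(p_0)) = q, where Q satisfies continuity, balance, weak substitutes and connected strict substitutes. Then the map p_0 ↦ P(p_0) is nondecreasing (coordinatewise) and continuous. -/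
set_option maxHeartbeats 1000000

/-- Key comparison lemma: two equilibria with ordered `z0`-coordinate are ordered everywhere. -/
theorem price_comparison {Z : Type*} [Fintype Z] [DecidableEq Z]
    (L U : Z → ℝ) (E : Set (Z → ℝ))
    (hE : ∀ p : Z → ℝ, p ∈ E ↔ ∀ z, p z ∈ Set.Ioo (L z) (U z))
    (Q : (Z → ℝ) → Z → ℝ) (c : ℝ) (q : Z → ℝ) (z0 : Z)
    (hbal : ∀ p ∈ E, ∑ z, Q p z = c)
    (hq : ∑ z, q z = c)
    (hcss : ∀ X : Finset Z, X.Nonempty → X ≠ Finset.univ →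
      ∀ p ∈ E, ∀ p' ∈ E, (∀ x ∈ X, p x = p' x) → (∀ y ∉ X, p y ≤ p' y) → p ≠ p' →
      ∑ x ∈ X, Q p' x < ∑ x ∈ X, Q p x)
    (p p' : Z → ℝ) (hp : p ∈ E) (hp' : p' ∈ E)
    (hQp : Q p = q) (hQp' : Q p' = q) (h0 : p z0 ≤ p' z0) : ∀ z, p z ≤ p' z := by
  by_contra hcon
  push_neg at hcon
  set X : Finset Z := Finset.univ.filter (fun z => p' z < p z) with hX
  have hmemX : ∀ z, z ∈ X ↔ p' z < p z := by
    intro z; simp [hX]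
  have hXne : X.Nonempty := by
    obtain ⟨z, hz⟩ := hcon
    exact ⟨z, (hmemX z).2 hz⟩
  have hz0X : z0 ∉ X := by
    rw [hmemX]; exact not_lt.2 h0
  have hXneuniv : X ≠ Finset.univ := by
    intro h; exact hz0X (h ▸ Finset.mem_univ z0)
  set r : Z → ℝ := fun z => max (p z) (p' z) with hr
  have hrE : r ∈ E := by
    rw [hE]
    intro z
    have h1 := (hE p).1 hp z
    have h2 := (hE p').1 hp' z
    exact ⟨lt_max_of_lt_left h1.1, max_lt h1.2 h2.2⟩
  have hrX : ∀ z ∈ X, r z = p z := by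
    intro z hz; exact max_eq_left ((hmemX z).1 hz).le
  have hrXc : ∀ z, z ∉ X → r z = p' z := by
    intro z hz
    exact max_eq_right (not_lt.1 (fun h => hz ((hmemX z).2 h)))
  -- strict inequality on Xᶜ
  have hXc_ne : Xᶜ.Nonempty := ⟨z0, Finset.mem_compl.2 hz0X⟩
  have hXc_neuniv : Xᶜ ≠ Finset.univ := by
    intro h
    obtain ⟨z, hz⟩ := hXne
    have := h ▸ Finset.mem_univ z
    exact (Finset.mem_compl.1 this) hz
  have hp'ne_r : p' ≠ r := by
    obtain ⟨z, hz⟩ := hXne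
    intro h
    have := hrX z hz
    rw [← h] at this
    exact absurd this (ne_of_lt ((hmemX z).1 hz))
  have h2 : ∑ x ∈ Xᶜ, Q r x < ∑ x ∈ Xᶜ, Q p' x := by
    refine hcss Xᶜ hXc_ne hXc_neuniv p' hp' r hrE ?_ ?_ hp'ne_r
    · intro x hx; exact (hrXc x (Finset.mem_compl.1 hx)).symm
    · intro y hy
      have hyX : y ∈ X := by simpa using hy
      rw [hrX y hyX]
      exact ((hmemX y).1 hyX).le
  have h1 : ∑ x ∈ X, Q r x ≤ ∑ x ∈ X, Q p x := by
    by_cases hpr : p = r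
    · rw [hpr]
    · refine le_of_lt (hcss X hXne hXneuniv p hp r hrE ?_ ?_ hpr)
      · intro x hx; exact (hrX x hx).symm
      · intro y hy
        rw [hrXc y hy]
        exact not_lt.1 (fun h => hy ((hmemX y).2 h))
  have hbalr : ∑ z, Q r z = c := hbal r hrE
  have hsplit : ∑ x ∈ X, Q r x + ∑ x ∈ Xᶜ, Q r x = c := by
    rw [Finset.sum_add_sum_compl]; exact hbalr
  have hsplitq : ∑ x ∈ X, q x + ∑ x ∈ Xᶜ, q x = c := by
    rw [Finset.sum_add_sum_compl]; exact hq
  rw [hQp] at h1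
  rw [hQp'] at h2
  linarith

/-- **Monotonicity and continuity of the implicit price map.** Assume for each
`p₀ ∈ (L 0, U 0)` there is a unique `P p₀` with `Q (p₀, P p₀) = q`, where `Q` satisfies
continuity, balance, weak substitutes and connected strict substitutes. Then the map
`p₀ ↦ P p₀` is nondecreasing coordinatewise and continuous. -/
theorem price_map_monotone_continuous {Z : Type*} [Fintype Z] [DecidableEq Z]
    (L U : Z → ℝ) (E : Set (Z → ℝ))
    (hE : ∀ p : Z → ℝ, p ∈ E ↔ ∀ z, p z ∈ Set.Ioo (L z) (U z))
    (Q : (Z → ℝ) → Z → ℝ) (c : ℝ) (q : Z → ℝ) (z0 : Z)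
    (hcont : ContinuousOn Q E)
    (hbal : ∀ p ∈ E, ∑ z, Q p z = c)
    (hq : ∑ z, q z = c)
    -- weak substitutes: `Q x` is nondecreasing in `p x`
    (hweak_own : ∀ x : Z, ∀ p ∈ E, ∀ p' ∈ E,
      (∀ z, z ≠ x → p z = p' z) → p x ≤ p' x → Q p x ≤ Q p' x)
    -- weak substitutes: `Q x` is nonincreasing in `p y` for `y ≠ x`
    (hweak_cross : ∀ x y : Z, y ≠ x → ∀ p ∈ E, ∀ p' ∈ E,
      (∀ z, z ≠ y → p z = p' z) → p y ≤ p' y → Q p' x ≤ Q p x)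
    -- connected strict substitutes
    (hcss : ∀ X : Finset Z, X.Nonempty → X ≠ Finset.univ →
      ∀ p ∈ E, ∀ p' ∈ E, (∀ x ∈ X, p x = p' x) → (∀ y ∉ X, p y ≤ p' y) → p ≠ p' →
      ∑ x ∈ X, Q p' x < ∑ x ∈ X, Q p x)
    -- the implicit map `P` : for each `p₀`, `P p₀` is the unique solution with `(P p₀) 0 = p₀`
    (P : ℝ → Z → ℝ)
    (hP : ∀ p0 ∈ Set.Ioo (L z0) (U z0),
      P p0 ∈ E ∧ (P p0) z0 = p0 ∧ Q (P p0) = q)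
    (hPuniq : ∀ p0 ∈ Set.Ioo (L z0) (U z0), ∀ p ∈ E, p z0 = p0 → Q p = q → p = P p0) :
    (∀ p0 ∈ Set.Ioo (L z0) (U z0), ∀ p0' ∈ Set.Ioo (L z0) (U z0),
      p0 ≤ p0' → ∀ z, P p0 z ≤ P p0' z) ∧
    ContinuousOn P (Set.Ioo (L z0) (U z0)) := by
  have hmono : ∀ p0 ∈ Set.Ioo (L z0) (U z0), ∀ p0' ∈ Set.Ioo (L z0) (U z0),
      p0 ≤ p0' → ∀ z, P p0 z ≤ P p0' z := by
    intro p0 hp0 p0' hp0' hle z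
    obtain ⟨hE1, h01, hQ1⟩ := hP p0 hp0
    obtain ⟨hE2, h02, hQ2⟩ := hP p0' hp0'
    exact price_comparison L U E hE Q c q z0 hbal hq hcss (P p0) (P p0') hE1 hE2 hQ1 hQ2
      (by rw [h01, h02]; exact hle) z
  refine ⟨hmono, ?_⟩
  intro p0 hp0
  -- choose a < p0 < b inside the interval
  obtain ⟨a, haL, hap0⟩ := exists_between hp0.1
  obtain ⟨b, hp0b, hbU⟩ := exists_between hp0.2
  have ha : a ∈ Set.Ioo (L z0) (U z0) := ⟨haL, hap0.trans hp0.2⟩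
  have hb : b ∈ Set.Ioo (L z0) (U z0) := ⟨hp0.1.trans hp0b, hbU⟩
  set K : Set (Z → ℝ) := Set.Icc (P a) (P b) with hK
  have hKcompact : IsCompact K := isCompact_Icc
  have hKE : K ⊆ E := by
    intro x hx
    rw [hE]
    intro z
    obtain ⟨haE, -, -⟩ := hP a ha
    obtain ⟨hbE, -, -⟩ := hP b hb
    exact ⟨lt_of_lt_of_le ((hE _).1 haE z).1 (hx.1 z),
      lt_of_le_of_lt (hx.2 z) ((hE _).1 hbE z).2⟩
  have hmemK : ∀ u ∈ Set.Icc a b ∩ Set.Ioo (L z0) (U z0), P u ∈ K := by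
    rintro u ⟨⟨hau, hub⟩, hu⟩
    exact ⟨fun z => hmono a ha u hu hau z, fun z => hmono u hu b hb hub z⟩
  rw [ContinuousWithinAt]
  apply Filter.tendsto_of_subseq_tendsto
  intro ns hns
  -- ns tends to p0 within the interval
  have hns_nhds : Filter.Tendsto ns Filter.atTop (nhds p0) := hns.mono_right nhdsWithin_le_nhds
  have hev1 : ∀ᶠ n in Filter.atTop, ns n ∈ Set.Ioo a b :=
    hns_nhds.eventually (isOpen_Ioo.mem_nhds ⟨hap0, hp0b⟩)
  have hev2 : ∀ᶠ n in Filter.atTop, ns n ∈ Set.Ioo (L z0) (U z0) :=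
    hns.eventually (eventually_mem_nhdsWithin)
  obtain ⟨N, hN⟩ := Filter.eventually_atTop.1 (hev1.and hev2)
  set w : ℕ → ℝ := fun n => ns (n + N) with hw
  have hwmem : ∀ n, w n ∈ Set.Icc a b ∩ Set.Ioo (L z0) (U z0) := by
    intro n
    obtain ⟨h1, h2⟩ := hN (n + N) (Nat.le_add_left N n)
    exact ⟨⟨h1.1.le, h1.2.le⟩, h2⟩
  have hwK : ∀ n, P (w n) ∈ K := fun n => hmemK (w n) (hwmem n)
  obtain ⟨x, hxK, φ, hφ, hxlim⟩ := hKcompact.tendsto_subseq hwK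
  -- the limit x is a solution, hence equals P p0
  have hwtend : Filter.Tendsto w Filter.atTop (nhds p0) := by
    exact hns_nhds.comp (Filter.tendsto_add_atTop_nat N)
  have hwφtend : Filter.Tendsto (fun n => w (φ n)) Filter.atTop (nhds p0) :=
    hwtend.comp hφ.tendsto_atTop
  have hxE : x ∈ E := hKE hxK
  have hxz0 : x z0 = p0 := by
    have h1 : Filter.Tendsto (fun n => P (w (φ n)) z0) Filter.atTop (nhds (x z0)) :=
      ((continuous_apply z0).tendsto x).comp hxlim
    have h2 : ∀ n, P (w (φ n)) z0 = w (φ n) := fun n => (hP (w (φ n)) (hwmem (φ n)).2).2.1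
    have h3 : Filter.Tendsto (fun n => P (w (φ n)) z0) Filter.atTop (nhds p0) := by
      simp only [h2]; exact hwφtend
    exact tendsto_nhds_unique h1 h3
  have hxQ : Q x = q := by
    have hcx : Filter.Tendsto Q (nhdsWithin x E) (nhds (Q x)) := hcont x hxE
    have hseq : Filter.Tendsto (fun n => P (w (φ n))) Filter.atTop (nhdsWithin x E) := by
      apply tendsto_nhdsWithin_of_tendsto_nhds_of_eventually_within _ hxlim
      exact Filter.Eventually.of_forall (fun n => (hP (w (φ n)) (hwmem (φ n)).2).1)
    have h4 : Filter.Tendsto (fun n => Q (P (w (φ n)))) Filter.atTop (nhds (Q x)) :=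
      hcx.comp hseq
    have h5 : ∀ n, Q (P (w (φ n))) = q := fun n => (hP (w (φ n)) (hwmem (φ n)).2).2.2
    have h6 : Filter.Tendsto (fun n => Q (P (w (φ n)))) Filter.atTop (nhds q) := by
      simp only [h5]; exact tendsto_const_nhds
    exact tendsto_nhds_unique h4 h6
  have hxP : x = P p0 := hPuniq p0 hp0 x hxE hxz0 hxQ
  refine ⟨fun n => φ n + N, ?_⟩
  rw [← hxP]
  exact hxlim
end

section
/- Let M_xy : ℝ² → (0, ∞) be continuous, strictly increasing in each argument, with M_xy(a, b) → 0 as a → −∞ (b fixed) or b → −∞ (a fixed), and M_xy(a, b) → +∞ as a → +∞ (b fixed) or b → +∞ (a fixed). Fix b_0 ∈ ℝ for a distinguished 0 ∈ Y. Then there exist vectors ā ∈ ℝ^X and b̄ ∈ ℝ^Y with b̄_0 = b_0 such that ∑_{y∈Y} M_xy(ā_x, b̄_y) ≥ n_x for all x ∈ X and ∑_{x∈X} M_xy(ā_x, b̄_y) ≤ m_y for all y ∈ Y (i.e., a subsolution to the full-assignment matching system exists). -/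
open Filter

/-- A continuous function tending to `0` at `-∞` and to `+∞` at `+∞` attains
every positive value. -/
lemma solve_eq {f : ℝ → ℝ} (hc : Continuous f)
    (h0 : Tendsto f atBot (nhds 0)) (htop : Tendsto f atTop atTop)
    {c : ℝ} (hc0 : 0 < c) : ∃ t, f t = c := by
  obtain ⟨t1, ht1⟩ : ∃ t1, f t1 < c := (h0.eventually (gt_mem_nhds hc0)).exists
  obtain ⟨t2, ht2⟩ : ∃ t2, c ≤ f t2 := (htop.eventually_ge_atTop c).exists
  have : c ∈ Set.Icc (f t1) (f t2) := ⟨ht1.le, ht2⟩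
  exact intermediate_value_univ t1 t2 hc this

/-- **Existence of a subsolution in the full-assignment matching system.** Let each
`M x y : ℝ² → (0,∞)` be continuous, strictly increasing in each argument, tending to `0`
at `−∞` and to `+∞` at `+∞` in each argument. Fix `b₀ ∈ ℝ` for a distinguished `y₀ ∈ Y`.
Then there exist `ā ∈ ℝ^X` and `b̄ ∈ ℝ^Y` with `b̄ y₀ = b₀` such that
`∑ y, M x y (ā x) (b̄ y) ≥ n x` for all `x` and `∑ x, M x y (ā x) (b̄ y) ≤ m y` for all `y`. -/
theorem matching_subsolution_exists {X Y : Type*} [Fintype X] [Fintype Y]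
    [Nonempty X] [Nonempty Y]
    (M : X → Y → ℝ → ℝ → ℝ)
    (hpos : ∀ x y a b, 0 < M x y a b)
    (hcont : ∀ x y, Continuous fun ab : ℝ × ℝ => M x y ab.1 ab.2)
    (hmono1 : ∀ x y b, StrictMono fun a => M x y a b)
    (hmono2 : ∀ x y a, StrictMono fun b => M x y a b)
    (hbot1 : ∀ x y b, Tendsto (fun a => M x y a b) atBot (nhds 0))
    (htop1 : ∀ x y b, Tendsto (fun a => M x y a b) atTop atTop)
    (hbot2 : ∀ x y a, Tendsto (fun b => M x y a b) atBot (nhds 0))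
    (htop2 : ∀ x y a, Tendsto (fun b => M x y a b) atTop atTop)
    (n : X → ℝ) (m : Y → ℝ) (hn : ∀ x, 0 < n x) (hm : ∀ y, 0 < m y)
    (hbal : ∑ x, n x = ∑ y, m y)
    (y0 : Y) (b0 : ℝ) :
    ∃ (a : X → ℝ) (b : Y → ℝ), b y0 = b0 ∧
      (∀ x, n x ≤ ∑ y, M x y (a x) (b y)) ∧
      (∀ y, ∑ x, M x y (a x) (b y) ≤ m y) := by
  classical
  -- continuity of the partial maps
  have hcont1 : ∀ x y (c : ℝ), Continuous fun t => M x y t c := fun x y c =>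
    (hcont x y).comp (continuous_id.prodMk continuous_const)
  have hcont2 : ∀ x y (c : ℝ), Continuous fun t => M x y c t := fun x y c =>
    (hcont x y).comp (continuous_const.prodMk continuous_id)
  -- row sums as functions of the row variable
  set rowF : (Y → ℝ) → X → ℝ → ℝ := fun b x t => ∑ y, M x y t (b y) with hrowF
  set colF : (X → ℝ) → Y → ℝ → ℝ := fun a y s => ∑ x, M x y (a x) s with hcolF
  have hrow_mono : ∀ b x, StrictMono (rowF b x) := by
    intro b x t t' htt'
    exact Finset.sum_lt_sum_of_nonempty Finset.univ_nonempty
      fun y _ => hmono1 x y (b y) htt'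
  have hcol_mono : ∀ a y, StrictMono (colF a y) := by
    intro a y s s' hss'
    exact Finset.sum_lt_sum_of_nonempty Finset.univ_nonempty
      fun x _ => hmono2 x y (a x) hss'
  -- solvability of the row equations
  have hαex : ∀ (b : Y → ℝ) (x : X), ∃ t, rowF b x t = n x := by
    intro b x
    refine solve_eq (continuous_finset_sum _ fun y _ => hcont1 x y (b y)) ?_ ?_ (hn x)
    · have := tendsto_finset_sum (Finset.univ : Finset Y)
        (fun y _ => hbot1 x y (b y))
      simpa using this
    · obtain ⟨y1⟩ := ‹Nonempty Y›
      refine tendsto_atTop_mono (fun t => ?_) (htop1 x y1 (b y1))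
      exact Finset.single_le_sum (fun y _ => (hpos x y t (b y)).le) (Finset.mem_univ y1)
  choose α hα using hαex
  -- solvability of the column equations
  have hβex : ∀ (a : X → ℝ) (y : Y), ∃ s, colF a y s = m y := by
    intro a y
    refine solve_eq (continuous_finset_sum _ fun x _ => hcont2 x y (a x)) ?_ ?_ (hm y)
    · have := tendsto_finset_sum (Finset.univ : Finset X)
        (fun x _ => hbot2 x y (a x))
      simpa using this
    · obtain ⟨x1⟩ := ‹Nonempty X›
      refine tendsto_atTop_mono (fun s => ?_) (htop2 x1 y (a x1))
      exact Finset.single_le_sum (fun x _ => (hpos x y (a x) s).le) (Finset.mem_univ x1)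
  choose β hβ using hβex
  -- monotonicity of rowF in b, colF in a
  have hrowF_mono : ∀ {b b' : Y → ℝ}, b ≤ b' → ∀ x t, rowF b x t ≤ rowF b' x t := by
    intro b b' hbb' x t
    exact Finset.sum_le_sum fun y _ => (hmono2 x y t).monotone (hbb' y)
  have hcolF_mono : ∀ {a a' : X → ℝ}, a ≤ a' → ∀ y s, colF a y s ≤ colF a' y s := by
    intro a a' haa' y s
    exact Finset.sum_le_sum fun x _ => (hmono1 x y s).monotone (haa' x)
  -- α is antitone, β is antitone
  have hα_anti : ∀ {b b' : Y → ℝ}, b ≤ b' → ∀ x, α b' x ≤ α b x := by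
    intro b b' hbb' x
    by_contra h
    push_neg at h
    have h1 : rowF b' x (α b x) < rowF b' x (α b' x) := hrow_mono b' x h
    have h2 : rowF b x (α b x) ≤ rowF b' x (α b x) := hrowF_mono hbb' x _
    rw [hα b x, hα b' x] at *
    linarith
  have hβ_anti : ∀ {a a' : X → ℝ}, a ≤ a' → ∀ y, β a' y ≤ β a y := by
    intro a a' haa' y
    by_contra h
    push_neg at h
    have h1 : colF a' y (β a y) < colF a' y (β a' y) := hcol_mono a' y h
    have h2 : colF a y (β a y) ≤ colF a' y (β a y) := hcolF_mono haa' y _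
    rw [hβ a y, hβ a' y] at *
    linarith
  -- the upper bound A on α
  have hAex : ∀ x, ∃ t, M x y0 t b0 = n x := fun x =>
    solve_eq (hcont1 x y0 b0) (hbot1 x y0 b0) (htop1 x y0 b0) (hn x)
  choose A hA using hAex
  have hαA : ∀ (b : Y → ℝ), b y0 = b0 → ∀ x, α b x ≤ A x := by
    intro b hb x
    have h1 : M x y0 (α b x) (b y0) ≤ rowF b x (α b x) :=
      Finset.single_le_sum (fun y _ => (hpos x y (α b x) (b y)).le) (Finset.mem_univ y0)
    rw [hα b x, hb] at h1
    rw [← hA x] at h1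
    exact (hmono1 x y0 b0).le_iff_le.mp h1
  -- starting point: b_low
  have hsex : ∀ y, ∃ s, colF A y s ≤ m y := by
    intro y
    have := (hβ A y) ▸ le_refl (colF A y (β A y))
    exact ⟨β A y, le_of_eq (hβ A y)⟩
  choose s₀ hs₀ using hsex
  set blow : Y → ℝ := fun y => if y = y0 then b0 else min (s₀ y) b0 with hblow
  have hblow_y0 : blow y0 = b0 := by simp [hblow]
  have hblow_le : ∀ y, y ≠ y0 → colF A y (blow y) ≤ m y := by
    intro y hy
    have : blow y = min (s₀ y) b0 := by simp [hblow, hy]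
    rw [this]
    calc colF A y (min (s₀ y) b0) ≤ colF A y (s₀ y) :=
          (hcol_mono A y).monotone (min_le_left _ _)
      _ ≤ m y := hs₀ y
  -- the iteration map
  set T : (Y → ℝ) → (Y → ℝ) := fun b y => if y = y0 then b0 else β (α b) y with hT
  set b : ℕ → Y → ℝ := fun k => T^[k] blow with hb
  have hbsucc : ∀ k, b (k + 1) = T (b k) := by
    intro k
    simp only [hb, Function.iterate_succ_apply']
  have hby0 : ∀ k, b k y0 = b0 := by
    intro k
    cases k with
    | zero => simpa [hb] using hblow_y0
    | succ k => rw [hbsucc k]; simp [hT]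
  set a : ℕ → X → ℝ := fun k => α (b k) with ha
  have hrow_eq : ∀ k x, ∑ y, M x y (a k x) (b k y) = n x := fun k x => hα (b k) x
  have hcol_eq : ∀ k y, y ≠ y0 → ∑ x, M x y (a k x) (b (k + 1) y) = m y := by
    intro k y hy
    have : b (k + 1) y = β (a k) y := by rw [hbsucc k]; simp [hT, hy, ha]
    rw [this]
    exact hβ (a k) y
  -- b is monotone
  have hb_step : ∀ k, b k ≤ b (k + 1) := by
    intro k
    induction k with
    | zero =>
      intro y
      rw [hbsucc 0]
      by_cases hy : y = y0
      · subst hy; rw [hby0 0]; simp [hT]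
      · simp only [hT, if_neg hy]
        have hb0 : b 0 = blow := rfl
        have hcle : colF (α (b 0)) y (b 0 y) ≤ m y := by
          rw [hb0]
          calc colF (α blow) y (blow y) ≤ colF A y (blow y) :=
                hcolF_mono (fun x => hαA blow hblow_y0 x) y _
            _ ≤ m y := hblow_le y hy
        by_contra h2
        push_neg at h2
        have h3 : colF (α (b 0)) y (β (α (b 0)) y) < colF (α (b 0)) y (b 0 y) :=
          hcol_mono (α (b 0)) y h2
        rw [hβ (α (b 0)) y] at h3
        linarith
    | succ k ih =>
      intro y
      rw [hbsucc (k + 1)]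
      by_cases hy : y = y0
      · subst hy; rw [hby0 (k + 1)]; simp [hT]
      · simp only [hT, if_neg hy]
        have h' : b (k + 1) y = β (α (b k)) y := by rw [hbsucc k]; simp [hT, hy]
        rw [h']
        exact hβ_anti (fun x => hα_anti ih x) y
  have hb_mono : ∀ y, Monotone fun k => b k y := by
    intro y
    apply monotone_nat_of_le_succ
    intro k
    exact hb_step k y
  have ha_step : ∀ k, a (k + 1) ≤ a k := fun k x => hα_anti (hb_step k) x
  have ha_anti : ∀ x, Antitone fun k => a k x := by
    intro x
    apply antitone_nat_of_succ_le
    intro k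
    exact ha_step k x
  -- the a-sequence does not tend to -∞ in any coordinate
  have hnoV : ∀ x, ¬ Tendsto (fun k => a k x) atTop atBot := by
    intro x0 hx0
    -- Step A: some b-coordinate tends to +∞
    have hU : ∃ y1, Tendsto (fun k => b k y1) atTop atTop := by
      by_contra hnU
      push_neg at hnU
      have hBex : ∀ y, ∃ L, Tendsto (fun k => b k y) atTop (nhds L) := by
        intro y
        rcases tendsto_of_monotone (hb_mono y) with h | h
        · exact absurd h (hnU y)
        · exact h
      choose B hB using hBex
      have hble : ∀ k y, b k y ≤ B y := fun k y => (hb_mono y).ge_of_tendsto (hB y) k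
      have hub : Tendsto (fun k => ∑ y, M x0 y (a k x0) (B y)) atTop (nhds 0) := by
        have := tendsto_finset_sum (Finset.univ : Finset Y)
          (fun y _ => (hbot1 x0 y (B y)).comp hx0)
        simpa using this
      have hle : ∀ k, n x0 ≤ ∑ y, M x0 y (a k x0) (B y) := by
        intro k
        rw [← hrow_eq k x0]
        exact Finset.sum_le_sum fun y _ => (hmono2 x0 y (a k x0)).monotone (hble k y)
      have : n x0 ≤ 0 := ge_of_tendsto' hub hle
      linarith [hn x0]
    obtain ⟨y1, hy1⟩ := hU
    have hy1ne : y1 ≠ y0 := by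
      intro h
      have hconst : Tendsto (fun k => b k y1) atTop (nhds b0) := by
        simp only [h, hby0]
        exact tendsto_const_nhds
      exact not_tendsto_atTop_of_tendsto_nhds hconst hy1
    by_cases hall : ∀ x, Tendsto (fun k => a k x) atTop atBot
    · -- Step C: all rows go to -∞; contradiction with total mass
      have hy0col : Tendsto (fun k => ∑ x, M x y0 (a (k + 1) x) b0) atTop (nhds 0) := by
        have := tendsto_finset_sum (Finset.univ : Finset X)
          (fun x _ => (hbot1 x y0 b0).comp ((hall x).comp (tendsto_add_atTop_nat 1)))
        simpa using this
      have key : ∀ k, m y0 ≤ ∑ x, M x y0 (a (k + 1) x) b0 := by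
        intro k
        have h1 : ∑ x, n x = ∑ y, ∑ x, M x y (a (k + 1) x) (b (k + 1) y) := by
          rw [Finset.sum_comm]
          exact Finset.sum_congr rfl fun x _ => (hrow_eq (k + 1) x).symm
        have h2 : ∀ y ∈ Finset.univ.erase y0,
            ∑ x, M x y (a (k + 1) x) (b (k + 1) y) ≤ m y := by
          intro y hy
          have hyne : y ≠ y0 := (Finset.mem_erase.mp hy).1
          rw [← hcol_eq k y hyne]
          exact Finset.sum_le_sum fun x _ =>
            (hmono1 x y (b (k + 1) y)).monotone (ha_step k x)
        have h3 : ∑ y ∈ Finset.univ.erase y0,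
            (∑ x, M x y (a (k + 1) x) (b (k + 1) y)) +
            ∑ x, M x y0 (a (k + 1) x) (b (k + 1) y0) =
            ∑ y, ∑ x, M x y (a (k + 1) x) (b (k + 1) y) :=
          Finset.sum_erase_add _ _ (Finset.mem_univ y0)
        have h4 : ∑ y ∈ Finset.univ.erase y0, m y + m y0 = ∑ y, m y :=
          Finset.sum_erase_add _ _ (Finset.mem_univ y0)
        have h5 : ∑ y ∈ Finset.univ.erase y0,
            (∑ x, M x y (a (k + 1) x) (b (k + 1) y)) ≤
            ∑ y ∈ Finset.univ.erase y0, m y := Finset.sum_le_sum h2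
        have h6 : b (k + 1) y0 = b0 := hby0 (k + 1)
        rw [h6] at h3
        linarith [hbal, h1, h3, h4, h5]
      have : m y0 ≤ 0 := ge_of_tendsto' hy0col key
      linarith [hm y0]
    · -- Step B: some row is bounded below; its column-y1 entry blows up
      push_neg at hall
      obtain ⟨x1, hx1⟩ := hall
      obtain ⟨L, hL⟩ : ∃ L, Tendsto (fun k => a k x1) atTop (nhds L) := by
        rcases tendsto_of_antitone (ha_anti x1) with h | h
        · exact absurd h hx1
        · exact h
      have hLle : ∀ k, L ≤ a k x1 := fun k => (ha_anti x1).le_of_tendsto hL k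
      have hblow : Tendsto (fun k => M x1 y1 L (b (k + 1) y1)) atTop atTop :=
        (htop2 x1 y1 L).comp (hy1.comp (tendsto_add_atTop_nat 1))
      obtain ⟨k, hk⟩ := (hblow.eventually_gt_atTop (m y1)).exists
      have h1 : M x1 y1 L (b (k + 1) y1) ≤ M x1 y1 (a k x1) (b (k + 1) y1) :=
        (hmono1 x1 y1 (b (k + 1) y1)).monotone (hLle k)
      have h2 : M x1 y1 (a k x1) (b (k + 1) y1) ≤ ∑ x, M x y1 (a k x) (b (k + 1) y1) :=
        Finset.single_le_sum (fun x _ => (hpos x y1 (a k x) (b (k + 1) y1)).le)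
          (Finset.mem_univ x1)
      rw [hcol_eq k y1 hy1ne] at h2
      linarith
  -- so every a-coordinate converges
  have haconv : ∀ x, ∃ L, Tendsto (fun k => a k x) atTop (nhds L) := by
    intro x
    rcases tendsto_of_antitone (ha_anti x) with h | h
    · exact absurd h (hnoV x)
    · exact h
  choose astar hastar using haconv
  have hage : ∀ k x, astar x ≤ a k x := fun k x => (ha_anti x).le_of_tendsto (hastar x) k
  -- every b-coordinate converges
  have hbconv : ∀ y, ∃ L, Tendsto (fun k => b k y) atTop (nhds L) := by
    intro y
    rcases tendsto_of_monotone (hb_mono y) with h | h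
    · exfalso
      by_cases hy : y = y0
      · have hconst : Tendsto (fun k => b k y) atTop (nhds b0) := by
          simp only [hy, hby0]; exact tendsto_const_nhds
        exact not_tendsto_atTop_of_tendsto_nhds hconst h
      · have hub : ∀ k, b (k + 1) y ≤ β astar y := by
          intro k
          have : b (k + 1) y = β (a k) y := by rw [hbsucc k]; simp [hT, hy, ha]
          rw [this]
          exact hβ_anti (fun x => hage k x) y
        have h' : Tendsto (fun k => b (k + 1) y) atTop atTop :=
          h.comp (tendsto_add_atTop_nat 1)
        obtain ⟨k, hk⟩ := (h'.eventually_gt_atTop (β astar y)).exists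
        exact absurd (hub k) (not_le.mpr hk)
    · exact h
  choose bstar hbstar using hbconv
  have hbstar_y0 : bstar y0 = b0 := by
    have h1 : Tendsto (fun k => b k y0) atTop (nhds b0) := by
      simp only [hby0]; exact tendsto_const_nhds
    exact tendsto_nhds_unique (hbstar y0) h1
  -- limit of entries
  have hterm : ∀ x y, Tendsto (fun k => M x y (a k x) (b k y)) atTop
      (nhds (M x y (astar x) (bstar y))) :=
    fun x y => ((hcont x y).tendsto (astar x, bstar y)).comp
      ((hastar x).prodMk_nhds (hbstar y))
  have hterm' : ∀ x y, Tendsto (fun k => M x y (a k x) (b (k + 1) y)) atTop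
      (nhds (M x y (astar x) (bstar y))) :=
    fun x y => ((hcont x y).tendsto (astar x, bstar y)).comp
      ((hastar x).prodMk_nhds ((hbstar y).comp (tendsto_add_atTop_nat 1)))
  -- limit row identities
  have hrowlim : ∀ x, ∑ y, M x y (astar x) (bstar y) = n x := by
    intro x
    have h1 : Tendsto (fun k => ∑ y, M x y (a k x) (b k y)) atTop
        (nhds (∑ y, M x y (astar x) (bstar y))) :=
      tendsto_finset_sum _ fun y _ => hterm x y
    have h2 : (fun k => ∑ y, M x y (a k x) (b k y)) = fun _ => n x :=
      funext fun k => hrow_eq k x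
    rw [h2] at h1
    exact tendsto_nhds_unique h1 tendsto_const_nhds
  -- limit column identities for y ≠ y0
  have hcollim : ∀ y, y ≠ y0 → ∑ x, M x y (astar x) (bstar y) = m y := by
    intro y hy
    have h1 : Tendsto (fun k => ∑ x, M x y (a k x) (b (k + 1) y)) atTop
        (nhds (∑ x, M x y (astar x) (bstar y))) :=
      tendsto_finset_sum _ fun x _ => hterm' x y
    have h2 : (fun k => ∑ x, M x y (a k x) (b (k + 1) y)) = fun _ => m y :=
      funext fun k => hcol_eq k y hy
    rw [h2] at h1
    exact tendsto_nhds_unique h1 tendsto_const_nhds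
  -- column y0 by balance
  have hcol0 : ∑ x, M x y0 (astar x) (bstar y0) = m y0 := by
    have h1 : ∑ x, n x = ∑ y, ∑ x, M x y (astar x) (bstar y) := by
      rw [Finset.sum_comm]
      exact Finset.sum_congr rfl fun x _ => (hrowlim x).symm
    have h3 : ∑ y ∈ Finset.univ.erase y0,
        (∑ x, M x y (astar x) (bstar y)) + ∑ x, M x y0 (astar x) (bstar y0) =
        ∑ y, ∑ x, M x y (astar x) (bstar y) :=
      Finset.sum_erase_add _ _ (Finset.mem_univ y0)
    have h4 : ∑ y ∈ Finset.univ.erase y0, m y + m y0 = ∑ y, m y :=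
      Finset.sum_erase_add _ _ (Finset.mem_univ y0)
    have h5 : ∑ y ∈ Finset.univ.erase y0, (∑ x, M x y (astar x) (bstar y)) =
        ∑ y ∈ Finset.univ.erase y0, m y :=
      Finset.sum_congr rfl fun y hy => hcollim y (Finset.mem_erase.mp hy).1
    linarith [hbal, h1, h3, h4, h5]
  refine ⟨astar, bstar, hbstar_y0, fun x => (hrowlim x).ge, fun y => ?_⟩
  by_cases hy : y = y0
  · subst hy; exact hcol0.le
  · exact (hcollim y hy).le
end

section
/- In the full-assignment matching model with matching functions M_xy satisfying continuity, strict isotonicity in each argument, and the limit conditions (tending to 0 at −∞ and +∞ at +∞ in each argument), for any normalization ψ satisfying the stated monotonicity/continuity/translation properties and any admissible K, there is at most one pair (a, b) ∈ ℝ^X × ℝ^Y satisfying n_x = ∑_y M_xy(a_x, b_y) for all x, m_y = ∑_x M_xy(a_x, b_y) for all y, and ψ(−a, b) = K. -/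
open Filter


open Filter

lemma matching_keyA {X Y : Type*} [Fintype X] [Fintype Y]
    (M : X → Y → ℝ → ℝ → ℝ)
    (hmono1 : ∀ x y b, StrictMono fun a => M x y a b)
    (hmono2 : ∀ x y a, StrictMono fun b => M x y a b)
    (a a' : X → ℝ) (b b' : Y → ℝ)
    (E1 : ∀ x, ∑ y, M x y (a x) (b y) = ∑ y, M x y (a' x) (b' y))
    (E2 : ∀ y, ∑ x, M x y (a x) (b y) = ∑ x, M x y (a' x) (b' y))
    (x0 : X) (hx0 : a x0 < a' x0) (y0 : Y) (hy0 : b y0 ≤ b' y0) : False := by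
  classical
  set X1 : Finset X := Finset.univ.filter (fun x => a x < a' x) with hX1
  set X2 : Finset X := Finset.univ.filter (fun x => ¬ a x < a' x) with hX2
  set Y1 : Finset Y := Finset.univ.filter (fun y => b' y < b y) with hY1
  set Y2 : Finset Y := Finset.univ.filter (fun y => ¬ b' y < b y) with hY2
  have I1 : (∑ x ∈ X1, ∑ y ∈ Y1, M x y (a x) (b y)) + (∑ x ∈ X1, ∑ y ∈ Y2, M x y (a x) (b y))
      = (∑ x ∈ X1, ∑ y ∈ Y1, M x y (a' x) (b' y)) + (∑ x ∈ X1, ∑ y ∈ Y2, M x y (a' x) (b' y)) := by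
    rw [← Finset.sum_add_distrib, ← Finset.sum_add_distrib]
    refine Finset.sum_congr rfl fun x _ => ?_
    rw [Finset.sum_filter_add_sum_filter_not, Finset.sum_filter_add_sum_filter_not]
    exact E1 x
  have I2 : (∑ y ∈ Y1, ∑ x ∈ X1, M x y (a x) (b y)) + (∑ y ∈ Y1, ∑ x ∈ X2, M x y (a x) (b y))
      = (∑ y ∈ Y1, ∑ x ∈ X1, M x y (a' x) (b' y)) + (∑ y ∈ Y1, ∑ x ∈ X2, M x y (a' x) (b' y)) := by
    rw [← Finset.sum_add_distrib, ← Finset.sum_add_distrib]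
    refine Finset.sum_congr rfl fun y _ => ?_
    rw [Finset.sum_filter_add_sum_filter_not, Finset.sum_filter_add_sum_filter_not]
    exact E2 y
  have c1 : ∑ y ∈ Y1, ∑ x ∈ X1, M x y (a x) (b y) = ∑ x ∈ X1, ∑ y ∈ Y1, M x y (a x) (b y) :=
    Finset.sum_comm
  have c2 : ∑ y ∈ Y1, ∑ x ∈ X1, M x y (a' x) (b' y) = ∑ x ∈ X1, ∑ y ∈ Y1, M x y (a' x) (b' y) :=
    Finset.sum_comm
  have hB : (∑ x ∈ X1, ∑ y ∈ Y2, M x y (a x) (b y)) < ∑ x ∈ X1, ∑ y ∈ Y2, M x y (a' x) (b' y) := by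
    refine Finset.sum_lt_sum_of_nonempty ⟨x0, Finset.mem_filter.2 ⟨Finset.mem_univ _, hx0⟩⟩ ?_
    intro x hx
    have hax : a x < a' x := (Finset.mem_filter.1 hx).2
    refine Finset.sum_lt_sum (fun y hy => ?_) ⟨y0, Finset.mem_filter.2 ⟨Finset.mem_univ _, not_lt.2 hy0⟩, ?_⟩
    · have hby : b y ≤ b' y := not_lt.1 (Finset.mem_filter.1 hy).2
      exact le_of_lt (lt_of_le_of_lt ((hmono2 x y (a x)).monotone hby) (hmono1 x y (b' y) hax))
    · exact lt_of_le_of_lt ((hmono2 x y0 (a x)).monotone hy0) (hmono1 x y0 (b' y0) hax)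
  have hC : (∑ y ∈ Y1, ∑ x ∈ X2, M x y (a' x) (b' y)) ≤ ∑ y ∈ Y1, ∑ x ∈ X2, M x y (a x) (b y) := by
    refine Finset.sum_le_sum fun y hy => Finset.sum_le_sum fun x hx => ?_
    have hby : b' y < b y := (Finset.mem_filter.1 hy).2
    have hax : a' x ≤ a x := not_lt.1 (Finset.mem_filter.1 hx).2
    exact le_of_lt (lt_of_lt_of_le (hmono2 x y (a' x) hby) ((hmono1 x y (b y)).monotone hax))
  linarith

lemma matching_keyB {X Y : Type*} [Fintype X] [Fintype Y]
    (M : X → Y → ℝ → ℝ → ℝ)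
    (hmono1 : ∀ x y b, StrictMono fun a => M x y a b)
    (hmono2 : ∀ x y a, StrictMono fun b => M x y a b)
    (a a' : X → ℝ) (b b' : Y → ℝ)
    (E1 : ∀ x, ∑ y, M x y (a x) (b y) = ∑ y, M x y (a' x) (b' y))
    (E2 : ∀ y, ∑ x, M x y (a x) (b y) = ∑ x, M x y (a' x) (b' y))
    (y0 : Y) (hy0 : b' y0 < b y0) (x0 : X) (hx0 : a' x0 ≤ a x0) : False :=
  matching_keyA (fun y x c d => M x y d c)
    (fun y x d => hmono2 x y d) (fun y x c => hmono1 x y c)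
    b' b a' a (fun y => (E2 y).symm) (fun x => (E1 x).symm) y0 hy0 x0 hx0

theorem matching_full_assignment_uniqueness' {X Y : Type*} [Fintype X] [Fintype Y]
    [Nonempty X] [Nonempty Y]
    (M : X → Y → ℝ → ℝ → ℝ)
    (hmono1 : ∀ x y b, StrictMono fun a => M x y a b)
    (hmono2 : ∀ x y a, StrictMono fun b => M x y a b)
    (n : X → ℝ) (m : Y → ℝ)
    (ψ : (X ⊕ Y → ℝ) → ℝ) (K : ℝ)
    (hψmono : Monotone ψ)
    (hψtrans : ∀ (p : X ⊕ Y → ℝ) (t : ℝ), ψ (fun z => p z + t) = ψ p + t)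
    (a a' : X → ℝ) (b b' : Y → ℝ)
    (hsys : (∀ x, n x = ∑ y, M x y (a x) (b y)) ∧
            (∀ y, m y = ∑ x, M x y (a x) (b y)) ∧
            ψ (Sum.elim (fun x => -(a x)) b) = K)
    (hsys' : (∀ x, n x = ∑ y, M x y (a' x) (b' y)) ∧
             (∀ y, m y = ∑ x, M x y (a' x) (b' y)) ∧
             ψ (Sum.elim (fun x => -(a' x)) b') = K) :
    a = a' ∧ b = b' := by
  classical
  haveI : Nonempty (X ⊕ Y) := ⟨Sum.inl (Classical.arbitrary X)⟩
  have main : ∀ (a a' : X → ℝ) (b b' : Y → ℝ),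
      (∀ x, ∑ y, M x y (a x) (b y) = ∑ y, M x y (a' x) (b' y)) →
      (∀ y, ∑ x, M x y (a x) (b y) = ∑ x, M x y (a' x) (b' y)) →
      ψ (Sum.elim (fun x => -(a x)) b) = K →
      ψ (Sum.elim (fun x => -(a' x)) b') = K →
      (∀ x, a' x ≤ a x) ∧ (∀ y, b y ≤ b' y) := by
    intro a a' b b' E1 E2 hK hK'
    have hcontra : ¬ ((∃ x, a x < a' x) ∨ (∃ y, b' y < b y)) := by
      intro hd
      have hall : (∀ x, a x < a' x) ∧ (∀ y, b' y < b y) := by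
        rcases hd with ⟨x0, hx0⟩ | ⟨y0, hy0⟩
        · have hy : ∀ y, b' y < b y := by
            intro y; by_contra hy; push_neg at hy
            exact matching_keyA M hmono1 hmono2 a a' b b' E1 E2 x0 hx0 y hy
          refine ⟨fun x => ?_, hy⟩
          by_contra hx; push_neg at hx
          exact matching_keyB M hmono1 hmono2 a a' b b' E1 E2
            (Classical.arbitrary Y) (hy _) x hx
        · have hx : ∀ x, a x < a' x := by
            intro x; by_contra hx; push_neg at hx
            exact matching_keyB M hmono1 hmono2 a a' b b' E1 E2 y0 hy0 x hx
          refine ⟨hx, fun y => ?_⟩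
          by_contra hy; push_neg at hy
          exact matching_keyA M hmono1 hmono2 a a' b b' E1 E2
            (Classical.arbitrary X) (hx _) y hy
      -- ψ contradiction
      set p : X ⊕ Y → ℝ := Sum.elim (fun x => -(a' x)) b' with hp
      set q : X ⊕ Y → ℝ := Sum.elim (fun x => -(a x)) b with hq
      have hlt : ∀ z, p z < q z := by
        intro z; cases z with
        | inl x => simpa [p, q] using neg_lt_neg (hall.1 x)
        | inr y => simpa [p, q] using hall.2 y
      set s : ℝ := Finset.univ.inf' Finset.univ_nonempty (fun z => q z - p z) with hs
      have hspos : 0 < s := by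
        rw [hs, Finset.lt_inf'_iff]
        exact fun z _ => sub_pos.2 (hlt z)
      have hle : ∀ z, p z + s ≤ q z := by
        intro z
        have := Finset.inf'_le (fun z => q z - p z) (Finset.mem_univ z)
        linarith
      have h1 : ψ (fun z => p z + s) ≤ ψ q := hψmono hle
      rw [hψtrans p s] at h1
      rw [hK, hK'] at h1
      linarith
    push_neg at hcontra
    exact hcontra
  obtain ⟨h1, h2, h3⟩ := hsys
  obtain ⟨h1', h2', h3'⟩ := hsys'
  have E1 : ∀ x, ∑ y, M x y (a x) (b y) = ∑ y, M x y (a' x) (b' y) :=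
    fun x => (h1 x).symm.trans (h1' x)
  have E2 : ∀ y, ∑ x, M x y (a x) (b y) = ∑ x, M x y (a' x) (b' y) :=
    fun y => (h2 y).symm.trans (h2' y)
  obtain ⟨hA1, hB1⟩ := main a a' b b' E1 E2 h3 h3'
  obtain ⟨hA2, hB2⟩ := main a' a b' b (fun x => (E1 x).symm) (fun y => (E2 y).symm) h3' h3
  exact ⟨funext fun x => le_antisymm (hA2 x) (hA1 x),
         funext fun y => le_antisymm (hB1 y) (hB2 y)⟩

/-- **Uniqueness in the full-assignment matching model.** With matching functions `M x y`
continuous, strictly increasing in each argument, tending to `0` at `−∞` and `+∞` at `+∞`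
in each argument, and a normalization `ψ` which is continuous, weakly increasing,
strictly increasing along coordinatewise strict increases, and translation-equivariant,
there is at most one pair `(a, b)` satisfying the full-assignment system together with
the normalization `ψ(−a, b) = K`. -/
theorem matching_full_assignment_uniqueness {X Y : Type*} [Fintype X] [Fintype Y]
    [Nonempty X] [Nonempty Y]
    (M : X → Y → ℝ → ℝ → ℝ)
    (hpos : ∀ x y a b, 0 < M x y a b)
    (hcont : ∀ x y, Continuous fun ab : ℝ × ℝ => M x y ab.1 ab.2)
    (hmono1 : ∀ x y b, StrictMono fun a => M x y a b)
    (hmono2 : ∀ x y a, StrictMono fun b => M x y a b)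
    (hbot1 : ∀ x y b, Tendsto (fun a => M x y a b) atBot (nhds 0))
    (htop1 : ∀ x y b, Tendsto (fun a => M x y a b) atTop atTop)
    (hbot2 : ∀ x y a, Tendsto (fun b => M x y a b) atBot (nhds 0))
    (htop2 : ∀ x y a, Tendsto (fun b => M x y a b) atTop atTop)
    (n : X → ℝ) (m : Y → ℝ) (hn : ∀ x, 0 < n x) (hm : ∀ y, 0 < m y)
    (hbal : ∑ x, n x = ∑ y, m y)
    (ψ : (X ⊕ Y → ℝ) → ℝ) (K : ℝ)
    (hψcont : Continuous ψ)
    (hψmono : Monotone ψ)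
    (hψstrict : ∀ p p' : X ⊕ Y → ℝ, (∀ z, p z < p' z) → ψ p < ψ p')
    (hψtrans : ∀ (p : X ⊕ Y → ℝ) (t : ℝ), ψ (fun z => p z + t) = ψ p + t)
    (a a' : X → ℝ) (b b' : Y → ℝ)
    (hsys : (∀ x, n x = ∑ y, M x y (a x) (b y)) ∧
            (∀ y, m y = ∑ x, M x y (a x) (b y)) ∧
            ψ (Sum.elim (fun x => -(a x)) b) = K)
    (hsys' : (∀ x, n x = ∑ y, M x y (a' x) (b' y)) ∧
             (∀ y, m y = ∑ x, M x y (a' x) (b' y)) ∧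
             ψ (Sum.elim (fun x => -(a' x)) b') = K) :
    a = a' ∧ b = b' := by
  exact matching_full_assignment_uniqueness' M hmono1 hmono2 n m ψ K hψmono hψtrans
    a a' b b' hsys hsys'
end

section
/- In the full-assignment matching model with matching functions M_xy satisfying the standard conditions, the unique equilibrium (a*, b*) under normalization ψ(−a*, b*) = K is monotone in K: if K̃ ≥ K, then the corresponding equilibrium fixed effects satisfy ã*_x ≤ a*_x for all x ∈ X and b̃*_y ≥ b*_y for all y ∈ Y. -/
open Filter Finset

/-- Key comparison lemma: if two pairs `(a,b)` and `(a',b')` satisfy the same margin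
equations and `a x0 < a' x0` for some `x0`, then `a < a'` everywhere and `b' < b`
everywhere. -/
lemma matching_key_lemma {X Y : Type*} [Fintype X] [Fintype Y] [Nonempty Y]
    (M : X → Y → ℝ → ℝ → ℝ)
    (hmono1 : ∀ x y b, StrictMono fun a => M x y a b)
    (hmono2 : ∀ x y a, StrictMono fun b => M x y a b)
    (a a' : X → ℝ) (b b' : Y → ℝ)
    (h1 : ∀ x, ∑ y, M x y (a x) (b y) = ∑ y, M x y (a' x) (b' y))
    (h2 : ∀ y, ∑ x, M x y (a x) (b y) = ∑ x, M x y (a' x) (b' y))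
    (x0 : X) (hx0 : a x0 < a' x0) :
    (∀ x, a x < a' x) ∧ (∀ y, b' y < b y) := by
  classical
  set S : Finset X := univ.filter (fun x => a x < a' x) with hS
  set T : Finset Y := univ.filter (fun y => b y ≤ b' y) with hT
  set Tc : Finset Y := univ.filter (fun y => ¬ b y ≤ b' y) with hTc
  have hTempty : T = ∅ := by
    by_contra hne
    have hTne : T.Nonempty := Finset.nonempty_iff_ne_empty.mpr hne
    have hSne : S.Nonempty := ⟨x0, by simp [hS, hx0]⟩
    have hrow : ∑ x ∈ S, ∑ y, M x y (a x) (b y) = ∑ x ∈ S, ∑ y, M x y (a' x) (b' y) :=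
      Finset.sum_congr rfl (fun x _ => h1 x)
    have hsplitrow : ∀ (c : X → ℝ) (d : Y → ℝ),
        ∑ x ∈ S, ∑ y, M x y (c x) (d y)
          = ∑ x ∈ S, ∑ y ∈ T, M x y (c x) (d y) + ∑ x ∈ S, ∑ y ∈ Tc, M x y (c x) (d y) := by
      intro c d
      rw [← Finset.sum_add_distrib]
      refine Finset.sum_congr rfl (fun x _ => ?_)
      exact (Finset.sum_filter_add_sum_filter_not univ _ _).symm
    have hAT : ∑ x ∈ S, ∑ y ∈ T, M x y (a x) (b y)
        < ∑ x ∈ S, ∑ y ∈ T, M x y (a' x) (b' y) := by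
      refine Finset.sum_lt_sum_of_nonempty hSne (fun x hx => ?_)
      refine Finset.sum_lt_sum_of_nonempty hTne (fun y hy => ?_)
      have hax : a x < a' x := (Finset.mem_filter.mp hx).2
      have hby : b y ≤ b' y := (Finset.mem_filter.mp hy).2
      calc M x y (a x) (b y) < M x y (a' x) (b y) := hmono1 x y (b y) hax
        _ ≤ M x y (a' x) (b' y) := (hmono2 x y (a' x)).monotone hby
    have er1 := hsplitrow a b
    have er2 := hsplitrow a' b'
    have hATc : ∑ x ∈ S, ∑ y ∈ Tc, M x y (a' x) (b' y)
        < ∑ x ∈ S, ∑ y ∈ Tc, M x y (a x) (b y) := by linarith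
    have hcol : ∑ y ∈ Tc, ∑ x, M x y (a x) (b y) = ∑ y ∈ Tc, ∑ x, M x y (a' x) (b' y) :=
      Finset.sum_congr rfl (fun y _ => h2 y)
    have hsplitcol : ∀ (c : X → ℝ) (d : Y → ℝ),
        ∑ y ∈ Tc, ∑ x, M x y (c x) (d y)
          = ∑ y ∈ Tc, ∑ x ∈ S, M x y (c x) (d y)
            + ∑ y ∈ Tc, ∑ x ∈ univ.filter (fun x => ¬ a x < a' x), M x y (c x) (d y) := by
      intro c d
      rw [← Finset.sum_add_distrib]
      refine Finset.sum_congr rfl (fun y _ => ?_)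
      exact (Finset.sum_filter_add_sum_filter_not univ _ _).symm
    have hBSc : ∑ y ∈ Tc, ∑ x ∈ univ.filter (fun x => ¬ a x < a' x), M x y (a' x) (b' y)
        ≤ ∑ y ∈ Tc, ∑ x ∈ univ.filter (fun x => ¬ a x < a' x), M x y (a x) (b y) := by
      refine Finset.sum_le_sum (fun y hy => Finset.sum_le_sum (fun x hx => ?_))
      have hax : a' x ≤ a x := le_of_not_gt (Finset.mem_filter.mp hx).2
      have hby : b' y ≤ b y := le_of_lt (lt_of_not_ge (Finset.mem_filter.mp hy).2)
      calc M x y (a' x) (b' y) ≤ M x y (a x) (b' y) := (hmono1 x y (b' y)).monotone hax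
        _ ≤ M x y (a x) (b y) := (hmono2 x y (a x)).monotone hby
    have ec1 := hsplitcol a b
    have ec2 := hsplitcol a' b'
    have cm1 : ∑ x ∈ S, ∑ y ∈ Tc, M x y (a x) (b y)
        = ∑ y ∈ Tc, ∑ x ∈ S, M x y (a x) (b y) := Finset.sum_comm
    have cm2 : ∑ x ∈ S, ∑ y ∈ Tc, M x y (a' x) (b' y)
        = ∑ y ∈ Tc, ∑ x ∈ S, M x y (a' x) (b' y) := Finset.sum_comm
    linarith
  have hb : ∀ y, b' y < b y := by
    intro y
    by_contra h
    have hy : y ∈ T := by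
      simp only [hT, Finset.mem_filter, Finset.mem_univ, true_and]
      exact le_of_not_gt h
    rw [hTempty] at hy
    exact absurd hy (Finset.notMem_empty y)
  refine ⟨fun x => ?_, hb⟩
  by_contra h
  push_neg at h
  have hlt : ∑ y, M x y (a' x) (b' y) < ∑ y, M x y (a x) (b y) := by
    refine Finset.sum_lt_sum_of_nonempty univ_nonempty (fun y _ => ?_)
    calc M x y (a' x) (b' y) ≤ M x y (a x) (b' y) := (hmono1 x y (b' y)).monotone h
      _ < M x y (a x) (b y) := hmono2 x y (a x) (hb y)
  linarith [h1 x]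

/-- **Monotonicity of the equilibrium in the normalization constant.** In the
full-assignment matching model with standard matching functions, if `(a*, b*)` is the
unique equilibrium under normalization `ψ(−a*, b*) = K` and `(ã*, b̃*)` the one under
`ψ(−ã*, b̃*) = K̃` with `K̃ ≥ K`, then `ã* x ≤ a* x` for all `x` and `b̃* y ≥ b* y` for
all `y`. -/
theorem matching_equilibrium_monotone_in_K {X Y : Type*} [Fintype X] [Fintype Y]
    [Nonempty X] [Nonempty Y]
    (M : X → Y → ℝ → ℝ → ℝ)
    (hpos : ∀ x y a b, 0 < M x y a b)
    (hcont : ∀ x y, Continuous fun ab : ℝ × ℝ => M x y ab.1 ab.2)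
    (hmono1 : ∀ x y b, StrictMono fun a => M x y a b)
    (hmono2 : ∀ x y a, StrictMono fun b => M x y a b)
    (hbot1 : ∀ x y b, Tendsto (fun a => M x y a b) atBot (nhds 0))
    (htop1 : ∀ x y b, Tendsto (fun a => M x y a b) atTop atTop)
    (hbot2 : ∀ x y a, Tendsto (fun b => M x y a b) atBot (nhds 0))
    (htop2 : ∀ x y a, Tendsto (fun b => M x y a b) atTop atTop)
    (n : X → ℝ) (m : Y → ℝ) (hn : ∀ x, 0 < n x) (hm : ∀ y, 0 < m y)
    (hbal : ∑ x, n x = ∑ y, m y)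
    (ψ : (X ⊕ Y → ℝ) → ℝ)
    (hψcont : Continuous ψ)
    (hψmono : Monotone ψ)
    (hψstrict : ∀ p p' : X ⊕ Y → ℝ, (∀ z, p z < p' z) → ψ p < ψ p')
    (hψtrans : ∀ (p : X ⊕ Y → ℝ) (t : ℝ), ψ (fun z => p z + t) = ψ p + t)
    (K Kt : ℝ) (hKK : K ≤ Kt)
    (a at' : X → ℝ) (b bt : Y → ℝ)
    -- `(a, b)` is the equilibrium under normalization constant `K`
    (hsys : (∀ x, n x = ∑ y, M x y (a x) (b y)) ∧
            (∀ y, m y = ∑ x, M x y (a x) (b y)) ∧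
            ψ (Sum.elim (fun x => -(a x)) b) = K)
    -- `(ã, b̃)` is the equilibrium under normalization constant `K̃`
    (hsyst : (∀ x, n x = ∑ y, M x y (at' x) (bt y)) ∧
             (∀ y, m y = ∑ x, M x y (at' x) (bt y)) ∧
             ψ (Sum.elim (fun x => -(at' x)) bt) = Kt) :
    (∀ x, at' x ≤ a x) ∧ (∀ y, b y ≤ bt y) := by
  obtain ⟨hn1, hn2, hnK⟩ := hsys
  obtain ⟨ht1, ht2, htK⟩ := hsyst
  have h1 : ∀ x, ∑ y, M x y (a x) (b y) = ∑ y, M x y (at' x) (bt y) :=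
    fun x => (hn1 x).symm.trans (ht1 x)
  have h2 : ∀ y, ∑ x, M x y (a x) (b y) = ∑ x, M x y (at' x) (bt y) :=
    fun y => (hn2 y).symm.trans (ht2 y)
  have ha : ∀ x, at' x ≤ a x := by
    by_contra h
    push_neg at h
    obtain ⟨x0, hx0⟩ := h
    obtain ⟨hall, hb'⟩ := matching_key_lemma M hmono1 hmono2 a at' b bt h1 h2 x0 hx0
    have hlt : ψ (Sum.elim (fun x => -(at' x)) bt) < ψ (Sum.elim (fun x => -(a x)) b) := by
      refine hψstrict _ _ (fun z => ?_)
      cases z with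
      | inl x => simpa using hall x
      | inr y => simpa using hb' y
    rw [htK, hnK] at hlt
    linarith
  refine ⟨ha, fun y => ?_⟩
  by_contra h
  push_neg at h
  obtain ⟨hall, ha'⟩ := matching_key_lemma (fun y x b' a' => M x y a' b')
    (fun y x a' => hmono2 x y a') (fun y x b' => hmono1 x y b')
    bt b at' a (fun y => (ht2 y).symm.trans (hn2 y)) (fun x => (ht1 x).symm.trans (hn1 x)) y h
  obtain ⟨x⟩ := ‹Nonempty X›
  exact absurd (ha x) (not_le.mpr (ha' x))
end
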